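/- arXiv:1907.02103 — 2 statements merged into one kernel-verified Lean document; each statement's English description precedes it below -/
import Mathlib

section
/- For each c > 0 define the sequence F(c,n)(x) := e^{-cx} · T_n(x) on [0,1], where (T_n) is the typewriter sequence. Let J ⊂ ℕ₀^N \ {0} be finite, α_j ∈ ℝ \ {0} for j ∈ J, and c ∈ (0,∞)^N with coordinates in a ℚ-linearly independent set. Then the sequence F_n := Σ_{j∈J} α_j F(c₁,n)^{j₁}···F(c_N,n)^{j_N} equals (Σ_{j∈J} α_j e^{-(c·j)x}) · T_n(x), converges to 0 in Lebesgue measure on [0,1], but does not converge to 0 almost everywhere on [0,1]. -/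
open Filter Set MeasureTheory Topology

/-! Each `T n` with `n ≠ 0` is the indicator of a closed interval of length `2^{-⌊log₂ n⌋}`, so it
is idempotent and `F n = g · T n` with `g x = ∑ α_j e^{-(c·j) x}`; the shrinking supports give
convergence in measure. Every `x ∈ [0,1)` lies in infinitely many of these intervals, so a.e.
convergence would force `g = 0` a.e. on `(0,1)`, hence on `(0,1)` by continuity and on `ℝ` by
analyticity. The `ℚ`-independence of the `c i` makes the exponents `c·j` distinct, and then for
the smallest one `λ`, `e^{λx} g x` tends to its nonzero coefficient as `x → ∞`. -/

def IsTypewriter (T : ℕ → ℝ → ℝ) : Prop :=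
  ∀ k j : ℕ, j < 2 ^ k →
    T (2 ^ k + j) = indicator (Icc ((j : ℝ) * ((2 : ℝ) ^ k)⁻¹) (((j : ℝ) + 1) * ((2 : ℝ) ^ k)⁻¹)) 1

namespace IsTypewriter

variable {T : ℕ → ℝ → ℝ} {n : ℕ}

theorem exists_eq_indicator (hT : IsTypewriter T) (hn : n ≠ 0) :
    ∃ a : ℝ, T n = indicator (Icc a (a + ((2 : ℝ) ^ Nat.log 2 n)⁻¹)) 1 := by
  set k := Nat.log 2 n
  have hle : 2 ^ k ≤ n := Nat.pow_log_le_self 2 hn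
  have hlt : n < 2 ^ k * 2 := pow_succ 2 k ▸ Nat.lt_pow_succ_log_self one_lt_two n
  refine ⟨((n - 2 ^ k : ℕ) : ℝ) * ((2 : ℝ) ^ k)⁻¹, ?_⟩
  rw [← add_one_mul, ← hT k (n - 2 ^ k) (by omega), Nat.add_sub_of_le hle]

theorem isIdempotentElem (hT : IsTypewriter T) (hn : n ≠ 0) (x : ℝ) :
    IsIdempotentElem (T n x) := by
  obtain ⟨a, ha⟩ := hT.exists_eq_indicator hn
  rw [ha]
  by_cases hx : x ∈ Icc a (a + ((2 : ℝ) ^ Nat.log 2 n)⁻¹) <;> simp [IsIdempotentElem, hx]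

theorem volume_support_le (hT : IsTypewriter T) (hn : n ≠ 0) :
    volume (Function.support (T n)) ≤ ENNReal.ofReal ((2 : ℝ) ^ Nat.log 2 n)⁻¹ := by
  obtain ⟨a, ha⟩ := hT.exists_eq_indicator hn
  calc volume (Function.support (T n))
      ≤ volume (Icc a (a + ((2 : ℝ) ^ Nat.log 2 n)⁻¹)) :=
        measure_mono (ha ▸ support_indicator_subset)
    _ = ENNReal.ofReal ((2 : ℝ) ^ Nat.log 2 n)⁻¹ := by rw [Real.volume_Icc, add_sub_cancel_left]

theorem tendsto_volume_support (hT : IsTypewriter T) :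
    Tendsto (fun n => volume (Function.support (T n))) atTop (𝓝 0) := by
  have hlog : Tendsto (Nat.log 2) atTop atTop :=
    tendsto_atTop_atTop.mpr fun m => ⟨2 ^ m, fun n hn =>
      (Nat.le_log_iff_pow_le one_lt_two (Nat.one_le_iff_ne_zero.mp (Nat.one_le_two_pow.trans hn))).mpr hn⟩
  have hbound : Tendsto (fun n => ENNReal.ofReal ((2 : ℝ) ^ Nat.log 2 n)⁻¹) atTop (𝓝 0) := by
    simpa using ENNReal.tendsto_ofReal (tendsto_inv_atTop_zero.comp
      ((tendsto_pow_atTop_atTop_of_one_lt one_lt_two).comp hlog))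
  refine tendsto_of_tendsto_of_tendsto_of_le_of_le' tendsto_const_nhds hbound
    (Eventually.of_forall fun _ => zero_le) ?_
  filter_upwards [eventually_ne_atTop 0] with n hn using hT.volume_support_le hn

theorem frequently_eq_one (hT : IsTypewriter T) {x : ℝ} (hx : x ∈ Ico 0 1) :
    ∃ᶠ n in atTop, T n x = 1 := by
  refine frequently_atTop.mpr fun k => ⟨2 ^ k + ⌊x * 2 ^ k⌋₊,
    Nat.lt_two_pow_self.le.trans (Nat.le_add_right _ _), ?_⟩
  have hpow : (0 : ℝ) < 2 ^ k := by positivity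
  have hfloor : ⌊x * 2 ^ k⌋₊ < 2 ^ k := by
    rw [Nat.floor_lt (by nlinarith [hx.1])]
    push_cast
    nlinarith [hx.2]
  rw [hT k _ hfloor, indicator_of_mem, Pi.one_apply]
  constructor
  · rw [← div_eq_mul_inv, div_le_iff₀ hpow]
    exact Nat.floor_le (by nlinarith [hx.1])
  · rw [← div_eq_mul_inv, le_div_iff₀ hpow]
    exact (Nat.lt_floor_add_one _).le

end IsTypewriter

theorem prod_mul_pow_of_isIdempotentElem {ι R : Type*} [Fintype ι] [CommMonoid R]
    (a : ι → R) {t : R} (ht : IsIdempotentElem t) {j : ι → ℕ} (hj : j ≠ 0) :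
    ∏ i, (a i * t) ^ j i = (∏ i, a i ^ j i) * t := by
  have hsum : ∑ i, j i ≠ 0 := by
    obtain ⟨i, hi⟩ := Function.ne_iff.mp hj
    exact (Finset.sum_pos' (fun _ _ => Nat.zero_le _)
      ⟨i, Finset.mem_univ i, Nat.pos_of_ne_zero hi⟩).ne'
  rw [Finset.prod_congr rfl fun i _ => mul_pow (a i) t (j i), Finset.prod_mul_distrib,
    Finset.prod_pow_eq_pow_sum, ht.pow_eq hsum]

theorem Real.prod_exp_neg_mul_pow {ι : Type*} [Fintype ι] (c : ι → ℝ) (j : ι → ℕ) (x : ℝ) :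
    ∏ i, Real.exp (-(c i) * x) ^ j i = Real.exp (-(∑ i, c i * (j i : ℝ)) * x) := by
  rw [neg_mul, Finset.sum_mul, ← Finset.sum_neg_distrib, Real.exp_sum]
  exact Finset.prod_congr rfl fun i _ => by rw [← Real.exp_nat_mul]; ring_nf

theorem LinearIndependent.injective_sum_mul_natCast {ι : Type*} [Fintype ι] {c : ι → ℝ}
    (hc : LinearIndependent ℚ c) : Function.Injective fun j : ι → ℕ => ∑ i, c i * (j i : ℝ) := by
  intro a b hab
  have hzero : ∑ i, ((a i : ℚ) - b i) • c i = 0 := by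
    simp only [Rat.smul_def, Rat.cast_sub, Rat.cast_natCast, mul_comm _ (c _), mul_sub,
      Finset.sum_sub_distrib, hab, sub_self]
  funext i
  exact_mod_cast sub_eq_zero.mp (Fintype.linearIndependent_iff.mp hc _ hzero i)

section ExpSum

variable {ι : Type*} (s : Finset ι) (α μ : ι → ℝ)

noncomputable def expSum (x : ℝ) : ℝ := ∑ i ∈ s, α i * Real.exp (-(μ i) * x)

theorem analyticOnNhd_expSum : AnalyticOnNhd ℝ (expSum s α μ) univ := fun _ _ => by
  unfold expSum
  fun_prop

variable {s α μ}

theorem tendsto_exp_mul_expSum {i₀ : ι} (hi₀ : i₀ ∈ s) (hmin : ∀ i ∈ s, i ≠ i₀ → μ i₀ < μ i) :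
    Tendsto (fun x => Real.exp (μ i₀ * x) * expSum s α μ x) atTop (𝓝 (α i₀)) := by
  classical
  have hexp : ∀ x, Real.exp (μ i₀ * x) * expSum s α μ x =
      ∑ i ∈ s, α i * Real.exp ((μ i₀ - μ i) * x) := fun x => by
    rw [expSum, Finset.mul_sum]
    refine Finset.sum_congr rfl fun i _ => ?_
    rw [mul_left_comm, ← Real.exp_add]
    ring_nf
  simp_rw [hexp, ← Finset.add_sum_erase s _ hi₀, sub_self, zero_mul, Real.exp_zero, mul_one]
  conv => enter [3, 1]; rw [← add_zero (α i₀)]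
  refine tendsto_const_nhds.add ?_
  rw [← Finset.sum_const_zero (s := s.erase i₀)]
  refine tendsto_finsetSum _ fun i hi => ?_
  have hneg : μ i₀ - μ i < 0 := sub_neg.mpr (hmin i (Finset.mem_of_mem_erase hi)
    (Finset.ne_of_mem_erase hi))
  simpa using (Real.tendsto_exp_atBot.comp (tendsto_id.const_mul_atTop_of_neg hneg)).const_mul (α i)

theorem expSum_ne_zero (hs : s.Nonempty) (hμ : InjOn μ s) (hα : ∀ i ∈ s, α i ≠ 0) :
    expSum s α μ ≠ 0 := by
  intro hzero
  obtain ⟨i₀, hi₀, hmin⟩ := s.exists_min_image μ hs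
  have hlim := tendsto_exp_mul_expSum (α := α) hi₀ fun i hi hne =>
    (hmin i hi).lt_of_ne fun h => hne (hμ hi hi₀ h.symm)
  simp only [hzero, Pi.zero_apply, mul_zero] at hlim
  exact hα i₀ hi₀ (tendsto_nhds_unique hlim tendsto_const_nhds)

theorem expSum_eq_zero_of_eqOn {U : Set ℝ} (hU : IsOpen U) {x₀ : ℝ} (hx₀ : x₀ ∈ U)
    (h : EqOn (expSum s α μ) 0 U) : expSum s α μ = 0 :=
  funext fun x => (analyticOnNhd_expSum s α μ).eqOn_zero_of_preconnected_of_eventuallyEq_zero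
    isPreconnected_univ (mem_univ x₀) (eventually_of_mem (hU.mem_nhds hx₀) h) (mem_univ x)

end ExpSum

theorem typewriter_algebra_combination_general
    (T : ℕ → ℝ → ℝ)
    (hT : ∀ k j : ℕ, j < 2 ^ k →
      T (2 ^ k + j) =
        Set.indicator (Set.Icc ((j : ℝ) * ((2 : ℝ) ^ k)⁻¹) (((j : ℝ) + 1) * ((2 : ℝ) ^ k)⁻¹)) 1)
    (H : Set ℝ)
    (hind : LinearIndependent ℚ (fun h : H => (h : ℝ)))
    (N : ℕ) (c : Fin N → ℝ) (hc : ∀ i, c i ∈ H) (hcinj : Function.Injective c)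
    (J : Finset (Fin N → ℕ)) (hJne : J.Nonempty) (hJ0 : ∀ j ∈ J, j ≠ 0)
    (α : (Fin N → ℕ) → ℝ) (hα : ∀ j ∈ J, α j ≠ 0)
    (F : ℕ → ℝ → ℝ)
    (hF : ∀ n x, F n x =
      ∑ j ∈ J, α j * ∏ i, (Real.exp (-(c i) * x) * T n x) ^ (j i)) :
    (∀ n ≥ 1, ∀ x : ℝ,
        F n x = (∑ j ∈ J, α j * Real.exp (-(∑ i, c i * (j i : ℝ)) * x)) * T n x) ∧
    (∀ ε > (0 : ℝ),
        Tendsto (fun n => volume {x : ℝ | x ∈ Set.Icc (0 : ℝ) 1 ∧ ε < |F n x|})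
          atTop (nhds 0)) ∧
    ¬ (∀ᵐ x ∂(volume.restrict (Set.Icc (0 : ℝ) 1)),
        Tendsto (fun n => F n x) atTop (nhds 0)) := by
  have hT : IsTypewriter T := hT
  set g := expSum J α fun j => ∑ i, c i * (j i : ℝ)
  have hFg : ∀ n ≠ 0, ∀ x, F n x = g x * T n x := fun n hn x => by
    simp only [hF, g, expSum, Finset.sum_mul]
    refine Finset.sum_congr rfl fun j hj => ?_
    rw [prod_mul_pow_of_isIdempotentElem _ (hT.isIdempotentElem hn x) (hJ0 j hj),
      Real.prod_exp_neg_mul_pow, mul_assoc]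
  have hc_ind : LinearIndependent ℚ c :=
    hind.comp (fun i => ⟨c i, hc i⟩) fun _ _ h => hcinj (congrArg Subtype.val h)
  refine ⟨fun n hn => hFg n (by omega), fun ε hε => ?_, fun hae => ?_⟩
  · refine tendsto_of_tendsto_of_tendsto_of_le_of_le' tendsto_const_nhds hT.tendsto_volume_support
      (Eventually.of_forall fun _ => zero_le) ?_
    filter_upwards [eventually_ne_atTop 0] with n hn
    refine measure_mono fun x ⟨_, hx⟩ hTx => ?_
    rw [hFg n hn x, hTx, mul_zero, abs_zero] at hx
    exact hε.not_gt hx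
  · have hg_ae : g =ᵐ[volume.restrict (Ioo 0 1)] 0 := by
      filter_upwards [ae_restrict_of_ae_restrict_of_subset Ioo_subset_Icc_self hae,
        ae_restrict_mem measurableSet_Ioo] with x hx hxI
      have hFx : ∃ᶠ n in atTop, F n x = g x :=
        ((hT.frequently_eq_one (Ioo_subset_Ico_self hxI)).and_eventually
          (eventually_ne_atTop 0)).mono fun n ⟨h1, hn⟩ => by rw [hFg n hn, h1, mul_one]
      exact (tendsto_nhds_unique_of_frequently_eq hx tendsto_const_nhds hFx).symm
    have hg_Ioo : EqOn g 0 (Ioo 0 1) := Measure.eqOn_open_of_ae_eq hg_ae isOpen_Ioo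
      ((analyticOnNhd_expSum _ _ _).continuousOn.mono (subset_univ _)) continuousOn_const
    exact expSum_ne_zero hJne hc_ind.injective_sum_mul_natCast.injOn hα
      (expSum_eq_zero_of_eqOn isOpen_Ioo (x₀ := 1 / 2) (by norm_num) hg_Ioo)

/-- Algebraic combinations of the sequences F(c,n)(x) = e^{-cx} T_n(x) built from
the typewriter sequence: they equal (Σ_j α_j e^{-(c·j)x}) T_n(x), converge to 0
in Lebesgue measure on [0,1], but do not converge to 0 a.e. on [0,1]. -/
theorem typewriter_algebra_combination
    (T : ℕ → ℝ → ℝ)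
    (hT : ∀ k j : ℕ, j < 2 ^ k →
      T (2 ^ k + j) =
        Set.indicator (Set.Icc ((j : ℝ) * ((2 : ℝ) ^ k)⁻¹) (((j : ℝ) + 1) * ((2 : ℝ) ^ k)⁻¹)) 1)
    (H : Set ℝ) (hH : H ⊆ Set.Ioi (0 : ℝ))
    (hind : LinearIndependent ℚ (fun h : H => (h : ℝ)))
    (N : ℕ) (c : Fin N → ℝ) (hc : ∀ i, c i ∈ H) (hcinj : Function.Injective c)
    (J : Finset (Fin N → ℕ)) (hJne : J.Nonempty) (hJ0 : ∀ j ∈ J, j ≠ 0)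
    (α : (Fin N → ℕ) → ℝ) (hα : ∀ j ∈ J, α j ≠ 0)
    (F : ℕ → ℝ → ℝ)
    (hF : ∀ n x, F n x =
      ∑ j ∈ J, α j * ∏ i, (Real.exp (-(c i) * x) * T n x) ^ (j i)) :
    (∀ n ≥ 1, ∀ x : ℝ,
        F n x = (∑ j ∈ J, α j * Real.exp (-(∑ i, c i * (j i : ℝ)) * x)) * T n x) ∧
    (∀ ε > (0 : ℝ),
        Tendsto (fun n => volume {x : ℝ | x ∈ Set.Icc (0 : ℝ) 1 ∧ ε < |F n x|})
          atTop (nhds 0)) ∧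
    ¬ (∀ᵐ x ∂(volume.restrict (Set.Icc (0 : ℝ) 1)),
        Tendsto (fun n => F n x) atTop (nhds 0)) :=
  typewriter_algebra_combination_general T hT H hind N c hc hcinj J hJne hJ0 α hα F hF
end

section
/- Let Z be a metrizable separable topological vector space over ℝ, γ an infinite cardinal, and A, B ⊆ Z such that A + B ⊆ A, A ∩ B = ∅, B contains a dense linear subspace minus zero (B is dense-lineable), and A contains a linear subspace of dimension γ minus zero (A is γ-lineable). Then A contains a dense linear subspace of dimension γ minus zero (A is γ-dense-lineable). -/
/-!
Let `P ⊆ A ∪ {0}` be the `γ`-dimensional and `Q ⊆ B ∪ {0}` the dense subspace; `A ∩ B = ∅` gives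
`P ⊓ Q = ⊥`. For every linear `S : P → Q` the graph `{x + S x | x ∈ P}` has dimension `γ` and meets
`Q` only in `0`, so each of its nonzero vectors is `x + S x` with `x ∈ A` and `S x ∈ B ∪ {0}`,
hence lies in `A`. To make the graph dense, enumerate a dense subset of `Q` as `(b k)`, list each
term infinitely often as `b n.unpair.1`, and let `S` send the `n`-th vector `a n` of a countable
part of a basis of `P` to `(ε n)⁻¹ • b n.unpair.1`, where `ε n • a n → 0`: the graph contains
`b n.unpair.1 + ε n • a n`, which is dense.
-/

open Pointwise TopologicalSpace

open Filter Topology Set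

theorem exists_pos_smul_tendsto_zero {Z : Type*} [AddCommMonoid Z] [Module ℝ Z]
    [TopologicalSpace Z] [ContinuousSMul ℝ Z] [FirstCountableTopology Z] (a : ℕ → Z) :
    ∃ ε : ℕ → ℝ, (∀ n, 0 < ε n) ∧ Tendsto (fun n => ε n • a n) atTop (𝓝 0) := by
  obtain ⟨U, hU⟩ := (𝓝 (0 : Z)).exists_antitone_basis
  have hsmall : ∀ n, ∃ t : ℝ, t • a n ∈ U n ∧ 0 < t := fun n => by
    have hcont : Tendsto (fun t : ℝ => t • a n) (𝓝[>] 0) (𝓝 0) :=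
      ((continuous_id.smul continuous_const).tendsto' (0 : ℝ) 0 (zero_smul ℝ _)).mono_left
        nhdsWithin_le_nhds
    exact ((hcont.eventually_mem (hU.mem n)).and self_mem_nhdsWithin).exists
  choose ε hεU hε using hsmall
  exact ⟨ε, hε, hU.tendsto hεU⟩

theorem denseRange_unpair_add {Z : Type*} [AddGroup Z] [TopologicalSpace Z]
    [ContinuousAdd Z] {b d : ℕ → Z} (hb : DenseRange b) (hd : Tendsto d atTop (𝓝 0)) :
    DenseRange fun n => b n.unpair.1 + d n := by
  refine dense_closure.mp (hb.mono (range_subset_iff.2 fun m => ?_))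
  have hpair : Tendsto (Nat.pair m) atTop atTop :=
    tendsto_atTop_mono (Nat.right_le_pair m) tendsto_id
  refine mem_closure_of_tendsto (f := fun k => b m + d (Nat.pair m k)) (b := atTop) ?_
    (Eventually.of_forall fun k => ⟨Nat.pair m k, by simp⟩)
  simpa using tendsto_const_nhds.add (hd.comp hpair)

theorem exists_denseRange_seq_of_dense {X : Type*} [TopologicalSpace X] [Nonempty X]
    [PseudoMetrizableSpace X] [SeparableSpace X] {s : Set X} (hs : Dense s) :
    ∃ u : ℕ → s, DenseRange ((↑) ∘ u : ℕ → X) := by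
  have := (IsSeparable.of_separableSpace s).separableSpace
  have : Nonempty s := hs.nonempty.to_subtype
  obtain ⟨u, hu⟩ := exists_dense_seq s
  exact ⟨u, hs.denseRange_val.comp hu continuous_subtype_val⟩

namespace Submodule

variable {R Z : Type*} [Ring R] [AddCommGroup Z] [Module R Z] {P Q : Submodule R Z}

theorem disjoint_of_diff_zero_subset {A B : Set Z} (hPA : (P : Set Z) \ {0} ⊆ A)
    (hQB : (Q : Set Z) \ {0} ⊆ B) (hAB : A ∩ B = ∅) : Disjoint P Q := by
  refine disjoint_def.2 fun x hxP hxQ => by_contra fun hx0 => ?_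
  exact (Set.eq_empty_iff_forall_notMem.1 hAB) x ⟨hPA ⟨hxP, hx0⟩, hQB ⟨hxQ, hx0⟩⟩

theorem diff_zero_subset_of_le_sup {A B : Set Z} {M : Submodule R Z}
    (hPA : (P : Set Z) \ {0} ⊆ A) (hQB : (Q : Set Z) \ {0} ⊆ B) (hAB : A + B ⊆ A)
    (hle : M ≤ P ⊔ Q) (hMQ : Disjoint M Q) : (M : Set Z) \ {0} ⊆ A := by
  rintro x ⟨hxM, hx0 : x ≠ 0⟩
  obtain ⟨p, hp, q, hq, rfl⟩ := mem_sup.1 (hle hxM)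
  have hp0 : p ≠ 0 := by
    rintro rfl
    exact hx0 (disjoint_def.1 hMQ _ hxM (by simpa using hq))
  have hpA : p ∈ A := hPA ⟨hp, hp0⟩
  by_cases hq0 : q = 0
  · simpa [hq0] using hpA
  · exact hAB (Set.add_mem_add hpA (hQB ⟨hq, hq0⟩))

def graphEmbedding (S : P →ₗ[R] Q) : P →ₗ[R] Z := P.subtype + Q.subtype ∘ₗ S

@[simp]
theorem graphEmbedding_apply (S : P →ₗ[R] Q) (x : P) : graphEmbedding S x = x + S x := rfl

theorem eq_zero_of_graphEmbedding_mem (h : Disjoint P Q) (S : P →ₗ[R] Q) {x : P}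
    (hx : graphEmbedding S x ∈ Q) : x = 0 := by
  have hxQ : (x : Z) ∈ Q := by simpa using Q.sub_mem hx (S x).2
  simpa using disjoint_def.1 h _ x.2 hxQ

theorem graphEmbedding_injective (h : Disjoint P Q) (S : P →ₗ[R] Q) :
    Function.Injective (graphEmbedding S) :=
  (injective_iff_map_eq_zero _).2 fun _ hx =>
    eq_zero_of_graphEmbedding_mem h S (hx ▸ Q.zero_mem)

theorem disjoint_range_graphEmbedding (h : Disjoint P Q) (S : P →ₗ[R] Q) :
    Disjoint (LinearMap.range (graphEmbedding S)) Q := by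
  refine disjoint_def.2 ?_
  rintro _ ⟨x, rfl⟩ hx
  simp [eq_zero_of_graphEmbedding_mem h S hx]

theorem range_graphEmbedding_le (S : P →ₗ[R] Q) :
    LinearMap.range (graphEmbedding S) ≤ P ⊔ Q := by
  rintro _ ⟨x, rfl⟩
  exact add_mem_sup x.2 (S x).2

end Submodule

/-- Dense-lineability criterion: if A + B ⊆ A, A ∩ B = ∅, B is dense-lineable and
A is γ-lineable in a metrizable separable topological vector space, then A is
γ-dense-lineable. -/
theorem dense_lineability_criterion
    {Z : Type*} [AddCommGroup Z] [Module ℝ Z] [TopologicalSpace Z]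
    [IsTopologicalAddGroup Z] [ContinuousSMul ℝ Z]
    [MetrizableSpace Z] [SeparableSpace Z]
    (γ : Cardinal) (hγ : Cardinal.aleph0 ≤ γ)
    (A B : Set Z)
    (hAB : A + B ⊆ A) (hdisj : A ∩ B = ∅)
    (hB : ∃ M : Submodule ℝ Z, Dense (M : Set Z) ∧ (M : Set Z) \ {0} ⊆ B)
    (hA : ∃ M : Submodule ℝ Z, Module.rank ℝ M = γ ∧ (M : Set Z) \ {0} ⊆ A) :
    ∃ M : Submodule ℝ Z, Dense (M : Set Z) ∧ Module.rank ℝ M = γ ∧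
      (M : Set Z) \ {0} ⊆ A := by
  obtain ⟨Q, hQd, hQB⟩ := hB
  obtain ⟨P, hPr, hPA⟩ := hA
  have hPQ : Disjoint P Q := Submodule.disjoint_of_diff_zero_subset hPA hQB hdisj
  obtain ⟨u, hu⟩ := exists_denseRange_seq_of_dense hQd
  let w := Module.Basis.ofVectorSpace ℝ P
  have : Infinite (Module.Basis.ofVectorSpaceIndex ℝ P) :=
    Cardinal.infinite_iff.2 (w.mk_eq_rank''.trans hPr ▸ hγ)
  let e := Infinite.natEmbedding (Module.Basis.ofVectorSpaceIndex ℝ P)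
  obtain ⟨ε, hε, hεw⟩ := exists_pos_smul_tendsto_zero fun n => (w (e n) : Z)
  let S : P →ₗ[ℝ] Q := w.constr ℝ (Function.extend e (fun n => (ε n)⁻¹ • u n.unpair.1) 0)
  have hS : ∀ n, Submodule.graphEmbedding S (ε n • w (e n)) = u n.unpair.1 + ε n • w (e n) := by
    intro n
    simp [S, e.injective.extend_apply, smul_smul, (hε n).ne', add_comm]
  refine ⟨LinearMap.range (Submodule.graphEmbedding S), ?_, ?_, ?_⟩
  · exact (denseRange_unpair_add hu hεw).mono (range_subset_iff.2 fun n => ⟨_, hS n⟩)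
  · rw [rank_range_of_injective _ (Submodule.graphEmbedding_injective hPQ S), hPr]
  · exact Submodule.diff_zero_subset_of_le_sup hPA hQB hAB
      (Submodule.range_graphEmbedding_le S) (Submodule.disjoint_range_graphEmbedding hPQ S)
end
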